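/- arXiv:2502.03823 — 2 statements merged into one kernel-verified Lean document; each statement's English description precedes it below -/
import Mathlib

section
/- Let (a_k)_{k≥0} be a sequence of nonnegative real numbers such that for every k ≥ 1, a_k ≤ 2^{k·2^{−k}} · a_{k−1}^{1 − 2^{−k}}. Then for every n ≥ 0, a_n ≤ 2^{Σ_{k=1}^n k·2^{−k}} · a₀^{∏_{k=1}^n (1 − 2^{−k})}. In particular, if a₀ ≤ 1 then a_n ≤ 4 for all n ≥ 0. -/
/-!
Each step of the recursion raises the previous bound `2 ^ S * a₀ ^ P` to a power `e ≤ 1`,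
which keeps the factor `a₀ ^ P` exact but can only shrink `2 ^ S`; the exponents of `2`
therefore simply add up. Their total is a partial sum of `∑ k * 2⁻ᵏ = (1/2) / (1 - 1/2)² = 2`.
-/

open Finset

lemma Real.mul_rpow_le_mul_rpow_of_one_le {x y e : ℝ} (hy : 1 ≤ y) (hx : 0 ≤ x) (he : e ≤ 1) :
    (y * x) ^ e ≤ y * x ^ e := by
  rw [Real.mul_rpow (by linarith) hx]
  exact mul_le_mul_of_nonneg_right (Real.rpow_le_self_of_one_le hy he)
    (Real.rpow_nonneg hx e)

theorem le_rpow_sum_mul_rpow_prod_of_le_rpow_mul_rpow {a c e : ℕ → ℝ} {b : ℝ} (hb : 1 ≤ b)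
    (ha : ∀ k, 0 ≤ a k) (hc : ∀ k, 0 ≤ c k) (he₀ : ∀ k, 0 ≤ e k) (he₁ : ∀ k, e k ≤ 1)
    (hrec : ∀ k, a (k + 1) ≤ b ^ c (k + 1) * a k ^ e (k + 1)) (n : ℕ) :
    a n ≤ b ^ (∑ k ∈ Icc 1 n, c k) * a 0 ^ (∏ k ∈ Icc 1 n, e k) := by
  induction n with
  | zero => simp
  | succ n ih =>
    set S := ∑ k ∈ Icc 1 n, c k
    set P := ∏ k ∈ Icc 1 n, e k
    have hbS : 1 ≤ b ^ S := Real.one_le_rpow hb (sum_nonneg fun k _ ↦ hc k)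
    calc a (n + 1) ≤ b ^ c (n + 1) * a n ^ e (n + 1) := hrec n
      _ ≤ b ^ c (n + 1) * (b ^ S * a 0 ^ P) ^ e (n + 1) := by
          gcongr
          exacts [ha n, he₀ _]
      _ ≤ b ^ c (n + 1) * (b ^ S * (a 0 ^ P) ^ e (n + 1)) := by
          gcongr
          exact Real.mul_rpow_le_mul_rpow_of_one_le hbS (Real.rpow_nonneg (ha 0) P) (he₁ _)
      _ = b ^ (S + c (n + 1)) * a 0 ^ (P * e (n + 1)) := by
          rw [Real.rpow_add (by linarith), ← Real.rpow_mul (ha 0)]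
          ring
      _ = _ := by
          rw [sum_Icc_succ_top (by omega), prod_Icc_succ_top (by omega)]

lemma two_rpow_neg_natCast (k : ℕ) : (2 : ℝ) ^ (-(k : ℝ)) = (1 / 2) ^ k := by
  rw [Real.rpow_neg zero_le_two, Real.rpow_natCast, one_div, inv_pow]

lemma sum_Icc_natCast_mul_two_rpow_neg_le_two (n : ℕ) :
    ∑ k ∈ Icc 1 n, (k : ℝ) * (2 : ℝ) ^ (-(k : ℝ)) ≤ 2 := by
  have hr : ‖(1 / 2 : ℝ)‖ < 1 := by norm_num
  have hsum : Summable fun k : ℕ ↦ (k : ℝ) * (1 / 2) ^ k := by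
    simpa using summable_pow_mul_geometric_of_norm_lt_one 1 hr
  simp only [two_rpow_neg_natCast]
  calc ∑ k ∈ Icc 1 n, (k : ℝ) * (1 / 2) ^ k
      ≤ ∑' k : ℕ, (k : ℝ) * (1 / 2) ^ k := hsum.sum_le_tsum _ fun k _ ↦ by positivity
    _ = 2 := by rw [tsum_coe_mul_geometric_of_norm_lt_one hr]; norm_num

lemma two_rpow_neg_natCast_le_one (k : ℕ) : (2 : ℝ) ^ (-(k : ℝ)) ≤ 1 :=
  Real.rpow_le_one_of_one_le_of_nonpos one_le_two (by simp)

/-- Moser-type iteration: if `a_k ≤ 2^(k·2⁻ᵏ) · a_{k-1}^(1 - 2⁻ᵏ)` for all `k ≥ 1`, then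
`a_n ≤ 2^(∑_{k=1}^n k·2⁻ᵏ) · a₀^(∏_{k=1}^n (1 - 2⁻ᵏ))`; in particular, if `a₀ ≤ 1` then
`a_n ≤ 4` for all `n`. -/
theorem moser_iteration_sequence (a : ℕ → ℝ) (ha : ∀ k, 0 ≤ a k)
    (hrec : ∀ k : ℕ, 1 ≤ k →
      a k ≤ (2 : ℝ) ^ ((k : ℝ) * (2 : ℝ) ^ (-(k : ℝ))) *
        a (k - 1) ^ (1 - (2 : ℝ) ^ (-(k : ℝ)))) :
    (∀ n : ℕ, a n ≤ (2 : ℝ) ^ (∑ k ∈ Finset.Icc 1 n, (k : ℝ) * (2 : ℝ) ^ (-(k : ℝ))) *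
        a 0 ^ (∏ k ∈ Finset.Icc 1 n, (1 - (2 : ℝ) ^ (-(k : ℝ))))) ∧
      (a 0 ≤ 1 → ∀ n : ℕ, a n ≤ 4) := by
  have hexp₀ (k : ℕ) : 0 ≤ 1 - (2 : ℝ) ^ (-(k : ℝ)) :=
    sub_nonneg.mpr (two_rpow_neg_natCast_le_one k)
  have hbound := le_rpow_sum_mul_rpow_prod_of_le_rpow_mul_rpow
    (c := fun k : ℕ ↦ (k : ℝ) * (2 : ℝ) ^ (-(k : ℝ))) one_le_two ha (fun k ↦ by positivity)
    hexp₀ (fun k ↦ by simp only [sub_le_self_iff]; positivity)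
    (fun k ↦ by simpa only [Nat.add_sub_cancel] using hrec (k + 1) k.succ_pos)
  refine ⟨hbound, fun ha₀ n ↦ ?_⟩
  calc a n ≤ _ := hbound n
    _ ≤ (2 : ℝ) ^ (2 : ℝ) * 1 :=
        mul_le_mul
          (Real.rpow_le_rpow_of_exponent_le one_le_two (sum_Icc_natCast_mul_two_rpow_neg_le_two n))
          (Real.rpow_le_one (ha 0) ha₀ (prod_nonneg fun k _ ↦ hexp₀ k))
          (Real.rpow_nonneg (ha 0) _) (by positivity)
    _ = 4 := by norm_num
end

section
/- Let (Ω, μ) be a measure space and f : Ω → ℝ a measurable function with ‖f‖_{L⁶(μ)} ≤ 1. Assume that for every k ≥ 1, ‖f‖_{L^{6·2^k}(μ)}^{2^k} ≤ 2^k · ‖f‖_{L^{6·2^{k−1}}(μ)}^{2^k − 1}. Then f is essentially bounded and ‖f‖_{L^∞(μ)} ≤ 4, i.e. |f| ≤ 4 μ-almost everywhere. -/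
open MeasureTheory
open scoped ENNReal NNReal

private lemma moser_aux_exp (k : ℕ) : 2 * k + 4 ≤ 2 ^ (k + 2) := by
  have : k < 2 ^ k := Nat.lt_two_pow_self
  have : 2 * k + 4 ≤ 4 * (k + 1) := by omega
  calc 2 * k + 4 ≤ 4 * (k + 1) := this
    _ ≤ 4 * 2 ^ k := by
        have : k + 1 ≤ 2 ^ k := Nat.lt_two_pow_self
        exact Nat.mul_le_mul_left 4 this
    _ = 2 ^ (k + 2) := by ring

/-- Moser iteration for Lᵖ norms: if `‖f‖_{L⁶} ≤ 1` and
`‖f‖_{L^{6·2ᵏ}}^{2ᵏ} ≤ 2ᵏ · ‖f‖_{L^{6·2^{k-1}}}^{2ᵏ - 1}` for all `k ≥ 1`, then `f` is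
essentially bounded with `‖f‖_{L^∞} ≤ 4`, i.e. `|f| ≤ 4` a.e. -/
theorem eLpNorm_top_le_of_moser_iteration
    {Ω : Type*} [MeasurableSpace Ω] (μ : Measure Ω)
    (f : Ω → ℝ) (hf : Measurable f)
    (h6 : eLpNorm f 6 μ ≤ 1)
    (hrec : ∀ k : ℕ, 1 ≤ k →
      eLpNorm f (6 * 2 ^ k) μ ^ (2 ^ k : ℕ) ≤
        2 ^ k * eLpNorm f (6 * 2 ^ (k - 1)) μ ^ (2 ^ k - 1 : ℕ)) :
    eLpNorm f ⊤ μ ≤ 4 ∧ ∀ᵐ ω ∂μ, |f ω| ≤ 4 := by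
  set a : ℕ → ℝ≥0∞ := fun k => eLpNorm f (6 * 2 ^ k) μ with ha
  -- Main iteration bound
  have key : ∀ k : ℕ, a k ^ (2 ^ k : ℕ) ≤ 2 ^ (2 ^ (k + 1) - (k + 2)) := by
    intro k
    induction k with
    | zero =>
      simp only [ha, pow_zero, pow_one, mul_one]
      simpa using h6
    | succ k ih =>
      have hrk := hrec (k + 1) (by omega)
      have hstep : a (k + 1) ^ (2 ^ (k + 1) : ℕ) ≤
          2 ^ (k + 1) * a k ^ (2 ^ (k + 1) - 1 : ℕ) := by
        simpa [ha] using hrk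
      have hp : k + 1 ≤ 2 ^ k := Nat.lt_two_pow_self
      have e1 : 2 ^ (k + 1) = 2 * 2 ^ k := by ring
      have e2 : 2 ^ (k + 2) = 4 * 2 ^ k := by ring
      rcases le_or_gt (a k) 1 with hle | hgt
      · -- a k ≤ 1
        have h1 : a k ^ (2 ^ (k + 1) - 1 : ℕ) ≤ 1 := pow_le_one' hle _
        have hb : a (k + 1) ^ (2 ^ (k + 1) : ℕ) ≤ 2 ^ (k + 1) := by
          calc a (k + 1) ^ (2 ^ (k + 1) : ℕ) ≤ 2 ^ (k + 1) * a k ^ (2 ^ (k + 1) - 1 : ℕ) :=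
                hstep
            _ ≤ 2 ^ (k + 1) * 1 := mul_le_mul_right h1 _
            _ = 2 ^ (k + 1) := mul_one _
        refine hb.trans (pow_le_pow_right₀ (by norm_num) ?_)
        omega
      · -- 1 ≤ a k
        have hone : (1 : ℝ≥0∞) ≤ a k := hgt.le
        have h1 : a k ^ (2 ^ (k + 1) - 1 : ℕ) ≤ a k ^ (2 ^ (k + 1) : ℕ) :=
          pow_le_pow_right₀ hone (Nat.sub_le _ _)
        have h2 : a k ^ (2 ^ (k + 1) : ℕ) = (a k ^ (2 ^ k : ℕ)) ^ 2 := by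
          rw [← pow_mul]; ring_nf
        have h3 : (a k ^ (2 ^ k : ℕ)) ^ 2 ≤ (2 ^ (2 ^ (k + 1) - (k + 2)) : ℝ≥0∞) ^ 2 := by
          gcongr
        have h4 : ((2 : ℝ≥0∞) ^ (2 ^ (k + 1) - (k + 2))) ^ 2 =
            2 ^ (2 ^ (k + 2) - (2 * k + 4)) := by
          rw [← pow_mul]
          congr 1
          omega
        calc a (k + 1) ^ (2 ^ (k + 1) : ℕ)
            ≤ 2 ^ (k + 1) * a k ^ (2 ^ (k + 1) - 1 : ℕ) := hstep
          _ ≤ 2 ^ (k + 1) * (2 ^ (2 ^ (k + 2) - (2 * k + 4)) : ℝ≥0∞) :=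
              mul_le_mul_right (h1.trans (h2.le.trans (h3.trans h4.le))) _
          _ = 2 ^ ((k + 1) + (2 ^ (k + 2) - (2 * k + 4))) := by rw [← pow_add]
          _ = 2 ^ (2 ^ (k + 2) - (k + 3)) := by congr 1; omega
  -- Hence `a k ^ (6 * 2^k) ≤ 4 ^ (6 * 2^k)`
  have key4 : ∀ k : ℕ, a k ^ (6 * 2 ^ k : ℕ) ≤ 4 ^ (6 * 2 ^ k : ℕ) := by
    intro k
    have h1 : a k ^ (2 ^ k : ℕ) ≤ 4 ^ (2 ^ k : ℕ) := by
      refine (key k).trans ?_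
      have : (4 : ℝ≥0∞) ^ (2 ^ k : ℕ) = 2 ^ (2 ^ (k + 1)) := by
        rw [show (4 : ℝ≥0∞) = 2 ^ 2 by norm_num, ← pow_mul]
        congr 1; ring
      rw [this]
      exact pow_le_pow_right₀ (by norm_num) (Nat.sub_le _ _)
    calc a k ^ (6 * 2 ^ k : ℕ) = (a k ^ (2 ^ k : ℕ)) ^ 6 := by
          rw [← pow_mul]; ring_nf
      _ ≤ ((4 : ℝ≥0∞) ^ (2 ^ k : ℕ)) ^ 6 := by gcongr
      _ = 4 ^ (6 * 2 ^ k : ℕ) := by rw [← pow_mul]; ring_nf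
  -- Chebyshev: for any c > 4, the level set has measure zero
  have cheb : ∀ c : ℝ≥0∞, 4 < c → μ {ω | c ≤ (‖f ω‖₊ : ℝ≥0∞)} = 0 := by
    intro c hc
    have hc0 : c ≠ 0 := by intro h; rw [h] at hc; exact (not_lt.2 zero_le) hc
    -- r = 4 / c < 1
    set r : ℝ≥0∞ := 4 * c⁻¹ with hr
    have hr1 : r < 1 := by
      rcases eq_or_ne c ⊤ with hct | hct
      · simp [hr, hct]
      · have hci0 : c⁻¹ ≠ 0 := ENNReal.inv_ne_zero.2 hct
        have hcit : c⁻¹ ≠ ⊤ := ENNReal.inv_ne_top.2 hc0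
        calc r = 4 * c⁻¹ := hr
          _ < c * c⁻¹ := by
              exact ENNReal.mul_lt_mul_left hci0 hcit hc
          _ = 1 := ENNReal.mul_inv_cancel hc0 hct
    have hbound : ∀ k : ℕ, μ {ω | c ≤ (‖f ω‖₊ : ℝ≥0∞)} ≤ r ^ (6 * 2 ^ k : ℕ) := by
      intro k
      have hp0 : ((6 : ℝ≥0∞) * 2 ^ k) ≠ 0 := mul_ne_zero (by norm_num) (pow_ne_zero _ (by norm_num))
      have hpt : ((6 : ℝ≥0∞) * 2 ^ k) ≠ ⊤ := by
        refine ENNReal.mul_ne_top (by norm_num) ?_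
        exact ENNReal.pow_ne_top (by norm_num)
      have hch := meas_ge_le_mul_pow_eLpNorm_enorm μ hp0 hpt hf.aestronglyMeasurable hc0 (by simp)
      have htr : ((6 : ℝ≥0∞) * 2 ^ k).toReal = ((6 * 2 ^ k : ℕ) : ℝ) := by
        push_cast
        rw [ENNReal.toReal_mul]
        simp [ENNReal.toReal_pow]
      rw [htr, ENNReal.rpow_natCast, ENNReal.rpow_natCast] at hch
      calc μ {ω | c ≤ (‖f ω‖₊ : ℝ≥0∞)}
          ≤ c⁻¹ ^ (6 * 2 ^ k : ℕ) * a k ^ (6 * 2 ^ k : ℕ) := hch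
        _ ≤ c⁻¹ ^ (6 * 2 ^ k : ℕ) * 4 ^ (6 * 2 ^ k : ℕ) := mul_le_mul_right (key4 k) _
        _ = r ^ (6 * 2 ^ k : ℕ) := by rw [hr, mul_pow]; ring
    have hbound' : ∀ k : ℕ, μ {ω | c ≤ (‖f ω‖₊ : ℝ≥0∞)} ≤ r ^ k := by
      intro k
      refine (hbound k).trans ?_
      refine pow_le_pow_right_of_le_one' hr1.le ?_
      have h1 : k ≤ 2 ^ k := (Nat.lt_two_pow_self).le
      have h2 : 2 ^ k ≤ 6 * 2 ^ k := Nat.le_mul_of_pos_left _ (by norm_num)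
      omega
    have htend : Filter.Tendsto (fun k : ℕ => r ^ k) Filter.atTop (nhds 0) :=
      ENNReal.tendsto_pow_atTop_nhds_zero_of_lt_one hr1
    have : μ {ω | c ≤ (‖f ω‖₊ : ℝ≥0∞)} ≤ 0 :=
      ge_of_tendsto htend (Filter.Eventually.of_forall hbound')
    exact le_antisymm this zero_le
  -- a.e. bound
  have hae : ∀ᵐ ω ∂μ, |f ω| ≤ 4 := by
    have hnull : μ {ω | ¬ |f ω| ≤ 4} = 0 := by
      refine measure_mono_null (t := ⋃ n : ℕ, {ω | (4 + ((n : ℝ≥0∞))⁻¹) ≤ (‖f ω‖₊ : ℝ≥0∞)})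
        ?_ ?_
      · intro ω hω
        simp only [Set.mem_setOf_eq, not_le] at hω
        have h4 : (4 : ℝ≥0∞) < (‖f ω‖₊ : ℝ≥0∞) := by
          rw [show (4 : ℝ≥0∞) = ((4 : ℝ≥0) : ℝ≥0∞) by norm_num, ENNReal.coe_lt_coe,
            ← NNReal.coe_lt_coe]
          simpa [Real.norm_eq_abs, abs_of_nonneg] using hω
        have hne : (‖f ω‖₊ : ℝ≥0∞) - 4 ≠ 0 := by
          simpa [tsub_eq_zero_iff_le, not_le] using h4
        obtain ⟨n, hn⟩ := ENNReal.exists_inv_nat_lt hne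
        refine Set.mem_iUnion.2 ⟨n, ?_⟩
        simp only [Set.mem_setOf_eq]
        calc (4 : ℝ≥0∞) + (n : ℝ≥0∞)⁻¹ ≤ 4 + ((‖f ω‖₊ : ℝ≥0∞) - 4) := add_le_add_right hn.le 4
          _ = (‖f ω‖₊ : ℝ≥0∞) := add_tsub_cancel_of_le h4.le
      · refine measure_iUnion_null fun n => cheb _ ?_
        exact ENNReal.lt_add_right (by norm_num)
          (ENNReal.inv_ne_zero.2 (ENNReal.natCast_ne_top n))
    exact ae_iff.2 hnull
  refine ⟨?_, hae⟩
  have : eLpNorm f ⊤ μ ≤ ENNReal.ofReal 4 := by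
    rw [eLpNorm_exponent_top]
    refine eLpNormEssSup_le_of_ae_bound ?_
    filter_upwards [hae] with ω hω
    simpa [Real.norm_eq_abs] using hω
  simpa using this
end
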